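/- arXiv:2205.13448 — 14 statements merged into one kernel-verified Lean document; each statement's English description precedes it below -/
import Mathlib

section
/- In every timestamped execution, the timestamp relation ≺ is asymmetric: for all operations op and op', it is not the case that both op ≺ op' and op' ≺ op. (This is the paper's Lemma 1: the order ≺ induced by the ledger timestamps is a strict order.) -/
/-- The timestamp of operation `op` at coordinate `j`: the number of operations
issued by `j` that appended before `op` read `j`'s ledger. -/
noncomputable def tstamp {n : ℕ} {Ops : Type} [Fintype Ops]
    (issuer : Ops → Fin n) (get : Ops → Fin n → ℝ) (app : Ops → ℝ)
    (op : Ops) (j : Fin n) : ℕ :=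
  Nat.card {op'' : Ops // issuer op'' = j ∧ app op'' < get op j}

/-- If `op` has a strictly smaller timestamp than `op'` at coordinate `issuer op`,
then there is a witness issued by `issuer op` appending between the two reads. -/
lemma tstamp_lt_witness {n : ℕ} {Ops : Type} [Fintype Ops]
    (issuer : Ops → Fin n) (get : Ops → Fin n → ℝ) (app : Ops → ℝ)
    (op op' : Ops)
    (h : tstamp issuer get app op (issuer op) < tstamp issuer get app op' (issuer op)) :
    ∃ op'' : Ops, issuer op'' = issuer op ∧ get op (issuer op) ≤ app op'' ∧
      app op'' < get op' (issuer op) := by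
  classical
  by_contra hc
  push_neg at hc
  set i := issuer op
  have hsub : ∀ op'' : Ops, (issuer op'' = i ∧ app op'' < get op' i) →
      (issuer op'' = i ∧ app op'' < get op i) := by
    intro op'' ⟨h1, h2⟩
    refine ⟨h1, ?_⟩
    by_contra h3
    push_neg at h3
    linarith [hc op'' h1 h3]
  have hle : tstamp issuer get app op' i ≤ tstamp issuer get app op i := by
    unfold tstamp
    rw [Nat.card_eq_fintype_card, Nat.card_eq_fintype_card]
    exact Fintype.card_subtype_mono _ _ hsub
  omega

/-- If `op ≺ op'` then `app op < get op' (issuer op)`. -/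
lemma prec_app_lt {n : ℕ} {Ops : Type} [Fintype Ops]
    (issuer : Ops → Fin n) (get : Ops → Fin n → ℝ) (app : Ops → ℝ)
    (hga : ∀ op j, get op j < app op)
    (hseq : ∀ op op' : Ops, op ≠ op' → issuer op = issuer op' →
      (∀ j, app op < get op' j) ∨ (∀ j, app op' < get op j))
    (op op' : Ops)
    (h : tstamp issuer get app op (issuer op) < tstamp issuer get app op' (issuer op)) :
    app op < get op' (issuer op) := by
  obtain ⟨op'', h1, h2, h3⟩ := tstamp_lt_witness issuer get app op op' h
  by_cases heq : op'' = op
  · subst heq; exact h3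
  · rcases hseq op op'' (fun e => heq e.symm) h1.symm with hcase | hcase
    · have := hcase (issuer op)
      have := hga op'' (issuer op)
      linarith [hga op'' (issuer op)]
    · linarith [hcase (issuer op)]

/-- Lemma 1: the timestamp relation `≺` is asymmetric, hence a strict order. -/
theorem timestamp_prec_asymm (n : ℕ) (hn : 1 ≤ n) (Ops : Type) [Fintype Ops]
    (issuer : Ops → Fin n) (get : Ops → Fin n → ℝ) (app : Ops → ℝ)
    (hga : ∀ op j, get op j < app op)
    (hseq : ∀ op op' : Ops, op ≠ op' → issuer op = issuer op' →
      (∀ j, app op < get op' j) ∨ (∀ j, app op' < get op j)) :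
    ∀ op op' : Ops,
      ¬ (tstamp issuer get app op (issuer op) < tstamp issuer get app op' (issuer op) ∧
         tstamp issuer get app op' (issuer op') < tstamp issuer get app op (issuer op')) := by
  rintro op op' ⟨h1, h2⟩
  have a1 := prec_app_lt issuer get app hga hseq op op' h1
  have a2 := prec_app_lt issuer get app hga hseq op' op h2
  have b1 := hga op' (issuer op)
  have b2 := hga op (issuer op')
  linarith
end

section
/- In every timestamped execution, real-time precedence implies timestamp precedence: for all operations op and op', if op → op' then op ≺ op'. (This is the paper's Lemma 2.) -/
/-- Lemma 2: real-time precedence implies timestamp precedence. -/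
theorem rt_implies_prec (n : ℕ) (hn : 1 ≤ n) (Ops : Type) [Fintype Ops]
    (issuer : Ops → Fin n) (get : Ops → Fin n → ℝ) (app : Ops → ℝ)
    (hga : ∀ op j, get op j < app op)
    (hseq : ∀ op op' : Ops, op ≠ op' → issuer op = issuer op' →
      (∀ j, app op < get op' j) ∨ (∀ j, app op' < get op j)) :
    ∀ op op' : Ops, (∀ j, app op < get op' j) →
      tstamp issuer get app op (issuer op) < tstamp issuer get app op' (issuer op) := by
  classical
  intro op op' h
  unfold tstamp
  rw [Nat.card_eq_fintype_card, Nat.card_eq_fintype_card,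
    Fintype.card_subtype, Fintype.card_subtype]
  apply Finset.card_lt_card
  constructor
  · intro x hx
    simp only [Finset.mem_filter, Finset.mem_univ, true_and] at hx ⊢
    exact ⟨hx.1, hx.2.trans ((hga op (issuer op)).trans (h (issuer op)))⟩
  · intro hsub
    have := hsub (by simp [h (issuer op)] : op ∈ Finset.univ.filter
      fun op'' => issuer op'' = issuer op ∧ app op'' < get op' (issuer op))
    simp only [Finset.mem_filter] at this
    exact absurd this.2.2 (not_lt.mpr (hga op (issuer op)).le)
end

section
/- In every timestamped execution, for all operations op and op': op' ≺ op holds if and only if app op' < get op (issuer op'). (This is the combinatorial core of the paper's Lemma 3: the set of records visible in the get phase of op consists exactly of the operations that precede op in the order ≺.) -/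
/-!
The ledger of the issuer `j` of `op'` only grows, and `op'` itself is an entry of it that is
visible to `op` exactly when `app op' < get op j`. If it is, the ledger `op` reads strictly extends
the one `op'` read. If it is not, sequentiality forbids any other entry of `j` to be appended
between `get op' j` and `app op'`, so `op` sees no more of `j`'s ledger than `op'` did.
-/

section Ledger

variable {n : ℕ} {Ops : Type} [Finite Ops] (issuer : Ops → Fin n) (app : Ops → ℝ)

noncomputable def ledgerLength (j : Fin n) (t : ℝ) : ℕ :=
  Nat.card {x : Ops // issuer x = j ∧ app x < t}

variable {issuer app}

lemma ledgerLength_le_of_forall {j : Fin n} {s t : ℝ}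
    (h : ∀ x, issuer x = j → app x < t → app x < s) :
    ledgerLength issuer app j t ≤ ledgerLength issuer app j s :=
  Nat.card_mono (Set.toFinite {x | issuer x = j ∧ app x < s})
    fun x ⟨hx, hxt⟩ => ⟨hx, h x hx hxt⟩

lemma ledgerLength_lt_of_app_mem_Ico {j : Fin n} {s t : ℝ} {x : Ops}
    (hx : issuer x = j) (hsx : s ≤ app x) (hxt : app x < t) :
    ledgerLength issuer app j s < ledgerLength issuer app j t := by
  refine Set.ncard_lt_ncard (s := {y | issuer y = j ∧ app y < s}) ⟨?_, ?_⟩ (Set.toFinite _)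
  · exact fun y ⟨hy, hys⟩ => ⟨hy, hys.trans (hsx.trans_lt hxt)⟩
  · exact fun hsub => (hsub ⟨hx, hxt⟩).2.not_ge hsx

end Ledger

lemma app_lt_get_of_app_le {n : ℕ} {Ops : Type} {issuer : Ops → Fin n}
    {get : Ops → Fin n → ℝ} {app : Ops → ℝ}
    (hga : ∀ op j, get op j < app op)
    (hseq : ∀ op op' : Ops, op ≠ op' → issuer op = issuer op' →
      (∀ j, app op < get op' j) ∨ (∀ j, app op' < get op j))
    {x op : Ops} (hx : issuer x = issuer op) (hne : x ≠ op) (hle : app x ≤ app op) (j : Fin n) :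
    app x < get op j :=
  (hseq x op hne hx).resolve_right (fun h => ((h j).trans (hga x j)).not_ge hle) j

lemma tstamp_eq_ledgerLength {n : ℕ} {Ops : Type} [Fintype Ops]
    (issuer : Ops → Fin n) (get : Ops → Fin n → ℝ) (app : Ops → ℝ) (op : Ops) (j : Fin n) :
    tstamp issuer get app op j = ledgerLength issuer app j (get op j) :=
  rfl

theorem prec_iff_visible_general (n : ℕ) (Ops : Type) [Fintype Ops]
    (issuer : Ops → Fin n) (get : Ops → Fin n → ℝ) (app : Ops → ℝ)
    (hga : ∀ op j, get op j < app op)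
    (hseq : ∀ op op' : Ops, op ≠ op' → issuer op = issuer op' →
      (∀ j, app op < get op' j) ∨ (∀ j, app op' < get op j)) :
    ∀ op op' : Ops,
      (tstamp issuer get app op' (issuer op') < tstamp issuer get app op (issuer op')) ↔
        app op' < get op (issuer op') := by
  intro op op'
  rw [tstamp_eq_ledgerLength, tstamp_eq_ledgerLength]
  constructor
  · contrapose!
    intro hle
    refine ledgerLength_le_of_forall fun x hx hxt => ?_
    have hne : x ≠ op' := by
      rintro rfl
      exact hxt.not_ge hle
    exact app_lt_get_of_app_le hga hseq hx hne (hxt.le.trans hle) _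
  · exact ledgerLength_lt_of_app_mem_Ico rfl (hga op' _).le

/-- Core of Lemma 3:  iff  appended before  read the ledger
of 's issuer. -/
theorem prec_iff_visible (n : ℕ) (hn : 1 ≤ n) (Ops : Type) [Fintype Ops]
    (issuer : Ops → Fin n) (get : Ops → Fin n → ℝ) (app : Ops → ℝ)
    (hga : ∀ op j, get op j < app op)
    (hseq : ∀ op op' : Ops, op ≠ op' → issuer op = issuer op' →
      (∀ j, app op < get op' j) ∨ (∀ j, app op' < get op j)) :
    ∀ op op' : Ops,
      (tstamp issuer get app op' (issuer op') < tstamp issuer get app op (issuer op')) ↔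
        app op' < get op (issuer op') :=
  prec_iff_visible_general n Ops issuer get app hga hseq
end

section
/- Suppose the pair (valid, execute) satisfies persistent validity and persistent execution. Let S : List Op and let K : List Op be a list of operations whose issuers are pairwise distinct and such that valid S op holds for every op in K. Then for every index r < K.length, valid (S ++ K.take r) (K.get r) holds and execute (S ++ K.take r) (K.get r) = execute S (K.get r). (This is the paper's lemma that a run with state S can be extended with all the concurrent valid operations of K, in any order, each remaining valid and returning the value it would return against S.) -/
section Persistence

variable {Op I V : Type} (issuer : Op → I) (valid : List Op → Op → Prop)

/-- Each operation of `L` in turn is valid against the current state, so persistent validity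
carries `op` (and the rest of `L`) across it. -/
theorem valid_append_of_pairwise
    (hPV : ∀ (S : List Op) (op op' : Op), issuer op ≠ issuer op' →
      valid S op → valid S op' → valid (S ++ [op']) op) :
    ∀ (S L : List Op) (op : Op), L.Pairwise (fun a b => issuer a ≠ issuer b) →
      (∀ x ∈ L, valid S x) → (∀ x ∈ L, issuer op ≠ issuer x) → valid S op →
      valid (S ++ L) op
  | S, [], _, _, _, _, hop => by rwa [List.append_nil]
  | S, x :: L, op, hL, hvalidL, hne, hop => by
    rw [List.pairwise_cons] at hL
    have hx : valid S x := hvalidL x List.mem_cons_self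
    rw [← List.singleton_append, ← List.append_assoc]
    refine valid_append_of_pairwise hPV (S ++ [x]) L op hL.2
      (fun y hy => hPV S y x (hL.1 y hy).symm (hvalidL y (List.mem_cons_of_mem x hy)) hx)
      (fun y hy => hne y (List.mem_cons_of_mem x hy)) (hPV S op x (hne x List.mem_cons_self) hop hx)

theorem execute_append_of_pairwise (execute : List Op → Op → V)
    (hPV : ∀ (S : List Op) (op op' : Op), issuer op ≠ issuer op' →
      valid S op → valid S op' → valid (S ++ [op']) op)
    (hPE : ∀ (S : List Op) (op op' : Op), issuer op ≠ issuer op' →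
      valid S op → valid S op' → execute (S ++ [op']) op = execute S op) :
    ∀ (S L : List Op) (op : Op), L.Pairwise (fun a b => issuer a ≠ issuer b) →
      (∀ x ∈ L, valid S x) → (∀ x ∈ L, issuer op ≠ issuer x) → valid S op →
      execute (S ++ L) op = execute S op
  | S, [], _, _, _, _, _ => by rw [List.append_nil]
  | S, x :: L, op, hL, hvalidL, hne, hop => by
    rw [List.pairwise_cons] at hL
    have hx : valid S x := hvalidL x List.mem_cons_self
    have hopx : issuer op ≠ issuer x := hne x List.mem_cons_self
    rw [← List.singleton_append, ← List.append_assoc, ← hPE S op x hopx hop hx]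
    exact execute_append_of_pairwise execute hPV hPE (S ++ [x]) L op hL.2
      (fun y hy => hPV S y x (hL.1 y hy).symm (hvalidL y (List.mem_cons_of_mem x hy)) hx)
      (fun y hy => hne y (List.mem_cons_of_mem x hy)) (hPV S op x hopx hop hx)

end Persistence

theorem List.Pairwise.take_issuer_ne {α I : Type} {f : α → I} {K : List α}
    (h : K.Pairwise fun a b => f a ≠ f b) (r : ℕ) (hr : r < K.length) :
    (K.take r).Pairwise (fun a b => f a ≠ f b) ∧ ∀ x ∈ K.take r, f (K.get ⟨r, hr⟩) ≠ f x := by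
  have h' := h.sublist (K.take_sublist (r + 1))
  rw [List.take_add_one, List.getElem?_eq_getElem hr, Option.toList_some, List.pairwise_append] at h'
  exact ⟨h'.1, fun x hx => (h'.2.2 x hx _ (List.mem_singleton_self _)).symm⟩

/-- If `(valid, execute)` satisfies persistent validity and persistent execution,
then a state `S` can be extended with a batch `K` of valid operations with
pairwise-distinct issuers, in any order: each operation of `K` remains valid at
its position and returns the value it would return against `S`. -/
theorem persistent_execution_batch_extension {Op I V : Type}
    (issuer : Op → I) (valid : List Op → Op → Prop) (execute : List Op → Op → V)
    (hPV : ∀ (S : List Op) (op op' : Op), issuer op ≠ issuer op' →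
      valid S op → valid S op' → valid (S ++ [op']) op)
    (hPE : ∀ (S : List Op) (op op' : Op), issuer op ≠ issuer op' →
      valid S op → valid S op' → execute (S ++ [op']) op = execute S op)
    (S K : List Op)
    (hdistinct : K.Pairwise fun a b => issuer a ≠ issuer b)
    (hvalid : ∀ op ∈ K, valid S op) :
    ∀ (r : ℕ) (hr : r < K.length),
      valid (S ++ K.take r) (K.get ⟨r, hr⟩) ∧
      execute (S ++ K.take r) (K.get ⟨r, hr⟩) = execute S (K.get ⟨r, hr⟩) := by
  intro r hr
  obtain ⟨hpairwise, hne⟩ := hdistinct.take_issuer_ne r hr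
  have hvalid_take : ∀ x ∈ K.take r, valid S x := fun x hx => hvalid x (List.mem_of_mem_take hx)
  have hop : valid S (K.get ⟨r, hr⟩) := hvalid _ (List.get_mem K _)
  exact ⟨valid_append_of_pairwise issuer valid hPV S _ _ hpairwise hvalid_take hne hop,
    execute_append_of_pairwise issuer valid execute hPV hPE S _ _ hpairwise hvalid_take hne hop⟩
end

section
/- Suppose the validity predicate valid satisfies persistent validity. Let S : List Op and let K : List Op be a list of operations whose issuers are pairwise distinct and such that valid S op holds for every op in K. Then for every index r < K.length, valid (S ++ K.take r) (K.get r) holds; that is, appending the operations of K to S in any order keeps every operation of K valid at its position. -/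
/-!
Append the operations of `K` one at a time. By induction on the prefix `L` already appended,
every operation `op` that was valid at `S` and whose issuer differs from all issuers in `L` is
still valid at `S ++ L`: if `L = L' ++ [a]`, both `op` and `a` are valid at `S ++ L'`, and
persistent validity lets `op` survive the appending of `a`. The operation at position `r` of `K`
has an issuer distinct from all those in `K.take r`, so it is valid at `S ++ K.take r`.
-/

def PersistentValidity {Op I : Type*} (issuer : Op → I) (valid : List Op → Op → Prop) : Prop :=
  ∀ (S : List Op) (op op' : Op), issuer op ≠ issuer op' →
    valid S op → valid S op' → valid (S ++ [op']) op

namespace PersistentValidity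

variable {Op I : Type*} {issuer : Op → I} {valid : List Op → Op → Prop}

theorem valid_append (h : PersistentValidity issuer valid) {S : List Op} {op : Op} {K : List Op}
    (hK : K.Pairwise fun a b => issuer a ≠ issuer b) (hKvalid : ∀ x ∈ K, valid S x)
    (hne : ∀ x ∈ K, issuer x ≠ issuer op) (hop : valid S op) : valid (S ++ K) op := by
  induction K using List.reverseRecOn generalizing op with
  | nil => simpa using hop
  | append_singleton L a ih =>
    obtain ⟨hL, -, hLa⟩ := List.pairwise_append.mp hK
    have hLvalid : ∀ x ∈ L, valid S x := fun x hx => hKvalid x (by simp [hx])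
    have hLne : ∀ x ∈ L, issuer x ≠ issuer op := fun x hx => hne x (by simp [hx])
    have hop' : valid (S ++ L) op := ih hL hLvalid hLne hop
    have ha : valid (S ++ L) a :=
      ih hL hLvalid (fun x hx => hLa x hx a (List.mem_singleton_self a))
        (hKvalid a (by simp))
    rw [← List.append_assoc]
    exact h _ _ _ (fun heq => hne a (by simp) heq.symm) hop' ha

theorem valid_append_take (h : PersistentValidity issuer valid) {S K : List Op}
    (hK : K.Pairwise fun a b => issuer a ≠ issuer b) (hKvalid : ∀ x ∈ K, valid S x)
    (r : ℕ) (hr : r < K.length) : valid (S ++ K.take r) K[r] := by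
  rw [← List.take_append_drop r K, List.pairwise_append] at hK
  obtain ⟨hprefix, -, hcross⟩ := hK
  have hmem : K[r] ∈ K.drop r := by
    rw [List.drop_eq_getElem_cons hr]
    exact List.mem_cons_self
  exact h.valid_append hprefix (fun x hx => hKvalid x (List.mem_of_mem_take hx))
    (fun x hx => hcross x hx _ hmem) (hKvalid _ (List.getElem_mem hr))

end PersistentValidity

/-- If `valid` satisfies persistent validity, then a state `S` can be extended
with a batch `K` of valid operations with pairwise-distinct issuers, in any
order, keeping every operation of `K` valid at its position. -/
theorem persistent_validity_batch_extension {Op I : Type}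
    (issuer : Op → I) (valid : List Op → Op → Prop)
    (hPV : ∀ (S : List Op) (op op' : Op), issuer op ≠ issuer op' →
      valid S op → valid S op' → valid (S ++ [op']) op)
    (S K : List Op)
    (hdistinct : K.Pairwise fun a b => issuer a ≠ issuer b)
    (hvalid : ∀ op ∈ K, valid S op) :
    ∀ (r : ℕ) (hr : r < K.length), valid (S ++ K.take r) (K.get ⟨r, hr⟩) :=
  PersistentValidity.valid_append_take hPV hdistinct hvalid
end

section
/- The punching system's validity predicate satisfies persistent validity: for every list S of punching operations and all operations op, op' with issuer op ≠ issuer op', if valid S op and valid S op' then valid (S ++ [op']) op. -/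
/-- Operations of the punching system. -/
inductive POp (I : Type) where
  | punchIn (t : ℕ) (i : I)
  | punchOut (i : I)

namespace POp

variable {I : Type}

def issuer : POp I → I
  | punchIn _ i => i
  | punchOut i => i

def isPunchIn : POp I → Prop
  | punchIn _ _ => True
  | punchOut _ => False

def isPunchOut : POp I → Prop
  | punchIn _ _ => False
  | punchOut _ => True

/-- The last operation in `S` issued by `i`, if any. -/
def lastOf [DecidableEq I] (S : List (POp I)) (i : I) : Option (POp I) :=
  (S.filter fun op => decide (op.issuer = i)).getLast?

/-- Validity predicate of the punching system. -/
def valid [DecidableEq I] (S : List (POp I)) : POp I → Prop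
  | punchIn _ i => lastOf S i = none ∨ ∃ op, lastOf S i = some op ∧ op.isPunchOut
  | punchOut i => ∃ op, lastOf S i = some op ∧ op.isPunchIn

end POp

/-- The punching system's validity predicate satisfies persistent validity. -/
theorem punching_persistent_validity {I : Type} [DecidableEq I]
    (S : List (POp I)) (op op' : POp I)
    (hne : op.issuer ≠ op'.issuer)
    (hop : POp.valid S op) (hop' : POp.valid S op') :
    POp.valid (S ++ [op']) op := by
  have key : POp.lastOf (S ++ [op']) op.issuer = POp.lastOf S op.issuer := by
    unfold POp.lastOf
    rw [List.filter_append]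
    have : ([op'].filter fun o => decide (POp.issuer o = POp.issuer op)) = [] := by
      simp [List.filter, Ne.symm hne]
    rw [this, List.append_nil]
  cases op with
  | punchIn t i =>
    simp only [POp.valid, POp.issuer] at *
    rwa [key]
  | punchOut i =>
    simp only [POp.valid, POp.issuer] at *
    rwa [key]
end

section
/- The punching system satisfies persistent execution: its validity predicate satisfies persistent validity, and for every list S of punching operations and all operations op, op' with issuer op ≠ issuer op', if valid S op and valid S op' then execute (S ++ [op']) op = execute S op. (This is the content of the paper's Theorem 6 concerning the punching system's properties.) -/
namespace POp

/-- Tests whether an operation is a punch-in of process `i`. -/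
def isPunchInOf [DecidableEq I] (i : I) : POp I → Bool
  | punchIn _ j => decide (j = i)
  | punchOut _ => false

/-- Execution function of the punching system: a punch-out of `i` returns the
time parameter of the last punch-in of `i` in `S` (none if there is none);
a punch-in returns none. -/
def execute [DecidableEq I] (S : List (POp I)) : POp I → Option ℕ
  | punchIn _ _ => none
  | punchOut i =>
    match (S.filter (isPunchInOf i)).getLast? with
    | some (punchIn t _) => some t
    | _ => none

end POp

/-- The punching system satisfies persistent execution (Theorem 6): persistent
validity holds, and under the same hypotheses the executed value is unchanged. -/
theorem punching_persistent_execution {I : Type} [DecidableEq I] :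
    (∀ (S : List (POp I)) (op op' : POp I), op.issuer ≠ op'.issuer →
      POp.valid S op → POp.valid S op' → POp.valid (S ++ [op']) op) ∧
    (∀ (S : List (POp I)) (op op' : POp I), op.issuer ≠ op'.issuer →
      POp.valid S op → POp.valid S op' →
      POp.execute (S ++ [op']) op = POp.execute S op) := by
  have hlast : ∀ (S : List (POp I)) (op' : POp I) (i : I), op'.issuer ≠ i →
      POp.lastOf (S ++ [op']) i = POp.lastOf S i := by
    intro S op' i h
    unfold POp.lastOf
    rw [List.filter_append]
    have : [op'].filter (fun op => decide (POp.issuer op = i)) = [] := by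
      simp [h]
    rw [this, List.append_nil]
  have hfilt : ∀ (S : List (POp I)) (op' : POp I) (i : I), op'.issuer ≠ i →
      (S ++ [op']).filter (POp.isPunchInOf i) = S.filter (POp.isPunchInOf i) := by
    intro S op' i h
    rw [List.filter_append]
    have : [op'].filter (POp.isPunchInOf i) = [] := by
      cases op' with
      | punchIn t j => simp [POp.isPunchInOf]; exact h
      | punchOut j => simp [POp.isPunchInOf]
    rw [this, List.append_nil]
  constructor
  · intro S op op' hne hv hv'
    cases op with
    | punchIn t i =>
      simp only [POp.valid] at hv ⊢
      rw [hlast S op' i (fun h => hne h.symm)]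
      exact hv
    | punchOut i =>
      simp only [POp.valid] at hv ⊢
      rw [hlast S op' i (fun h => hne h.symm)]
      exact hv
  · intro S op op' hne hv hv'
    cases op with
    | punchIn t i => rfl
    | punchOut i =>
      simp only [POp.execute]
      rw [hfilt S op' i (fun h => hne h.symm)]
end

section
/- In every legal history of the punching system, each process's operations strictly alternate starting with a punch-in: for every legal list S of punching operations and every identifier i, the subsequence of S consisting of the operations with issuer i has a punchIn at every even position and a punchOut at every odd position (positions counted from 0). -/
/-- A history is legal if every operation is valid against the prefix before it. -/
def PLegal {I : Type} [DecidableEq I] (S : List (POp I)) : Prop :=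
  ∀ (P : List (POp I)) (op : POp I) (Q : List (POp I)), S = P ++ op :: Q → POp.valid P op

/-!
Induction on the history, appending one operation at a time. The operations of `i` in a legal
history alternate `in, out, in, …`, so the last of them is a punch-in exactly when their number is
odd. Validity of the next operation of `i` then says it is a punch-in exactly when that number is
even, which is the alternation condition at the new position.
-/

namespace POp

variable {I : Type}

theorem isPunchOut_iff_not_isPunchIn (op : POp I) : op.isPunchOut ↔ ¬op.isPunchIn := by
  cases op <;> simp [isPunchIn, isPunchOut]

def Alternating (L : List (POp I)) : Prop :=
  ∀ (k : ℕ) (hk : k < L.length), L[k].isPunchIn ↔ k % 2 = 0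

theorem alternating_nil : Alternating ([] : List (POp I)) :=
  fun _ hk => absurd hk (Nat.not_lt_zero _)

theorem alternating_append_singleton_iff {L : List (POp I)} {op : POp I} :
    Alternating (L ++ [op]) ↔ Alternating L ∧ (op.isPunchIn ↔ L.length % 2 = 0) := by
  constructor
  · intro h
    refine ⟨fun k hk => ?_, ?_⟩
    · have := h k (by simp; omega)
      rwa [List.getElem_append_left hk] at this
    · simpa using h L.length (by simp)
  · rintro ⟨hL, hop⟩ k hk
    rcases Nat.lt_succ_iff_lt_or_eq.mp (by simpa using hk) with hk | rfl
    · simpa [List.getElem_append_left hk] using hL k hk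
    · simpa using hop

theorem Alternating.isPunchIn_iff_of_getLast?_eq {L : List (POp I)} {op : POp I}
    (hL : Alternating L) (hlast : L.getLast? = some op) :
    op.isPunchIn ↔ L.length % 2 = 1 := by
  obtain ⟨L', rfl⟩ := List.getLast?_eq_some_iff.mp hlast
  rw [(alternating_append_singleton_iff.mp hL).2, List.length_append, List.length_singleton]
  omega

variable [DecidableEq I]

theorem valid.isPunchIn_iff {S : List (POp I)} {op : POp I} {i : I} (hi : op.issuer = i)
    (hS : Alternating (S.filter fun o => decide (o.issuer = i))) (hop : valid S op) :
    op.isPunchIn ↔ (S.filter fun o => decide (o.issuer = i)).length % 2 = 0 := by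
  cases op with
  | punchIn t j =>
    obtain rfl : j = i := hi
    rcases hop with hnone | ⟨last, hlast, hout⟩
    · simp [isPunchIn, List.getLast?_eq_none_iff.mp hnone]
    · rw [isPunchOut_iff_not_isPunchIn, hS.isPunchIn_iff_of_getLast?_eq hlast] at hout
      simp only [isPunchIn, true_iff]
      omega
  | punchOut j =>
    obtain rfl : j = i := hi
    obtain ⟨last, hlast, hin⟩ := hop
    have := (hS.isPunchIn_iff_of_getLast?_eq hlast).mp hin
    simp only [isPunchIn, false_iff]
    omega

end POp

namespace PLegal

variable {I : Type} [DecidableEq I]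

theorem of_append {S R : List (POp I)} (h : PLegal (S ++ R)) : PLegal S :=
  fun P op Q hS => h P op (Q ++ R) (by simp [hS])

theorem valid_of_append_singleton {S : List (POp I)} {op : POp I} (h : PLegal (S ++ [op])) :
    POp.valid S op :=
  h S op [] rfl

theorem alternating_filter_issuer {S : List (POp I)} (hS : PLegal S) (i : I) :
    POp.Alternating (S.filter fun op => decide (op.issuer = i)) := by
  induction S using List.reverseRecOn with
  | nil => exact POp.alternating_nil
  | append_singleton T op ih =>
    have hT := ih hS.of_append
    rw [List.filter_append, List.filter_singleton]
    by_cases hi : op.issuer = i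
    · simpa [POp.alternating_append_singleton_iff, hT, hi] using
        hS.valid_of_append_singleton.isPunchIn_iff hi hT
    · simpa [hi] using hT

end PLegal

/-- In every legal history, each process's operations strictly alternate,
starting with a punch-in: in the subsequence of operations issued by `i`,
even positions are punch-ins and odd positions are punch-outs. -/
theorem punching_alternation {I : Type} [DecidableEq I]
    (S : List (POp I)) (hS : PLegal S) (i : I) :
    ∀ (k : ℕ) (hk : k < (S.filter fun op => decide (op.issuer = i)).length),
      (k % 2 = 0 → ((S.filter fun op => decide (op.issuer = i)).get ⟨k, hk⟩).isPunchIn) ∧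
      (k % 2 = 1 → ((S.filter fun op => decide (op.issuer = i)).get ⟨k, hk⟩).isPunchOut) := by
  intro k hk
  have hin := hS.alternating_filter_issuer i k hk
  rw [List.get_eq_getElem, POp.isPunchOut_iff_not_isPunchIn, hin]
  omega
end

section
/- The cryptocurrency object's validity predicate satisfies persistent validity: for every list S of cryptocurrency operations and all operations op, op' with issuer op ≠ issuer op', if valid S op and valid S op' then valid (S ++ [op']) op. (This is the paper's claim that the cryptocurrency (asset transfer) object satisfies the persistent validity property.) -/
/-- Operations of the cryptocurrency (asset transfer) object. -/
inductive COp (I : Type) where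
  | transfer (i k : I) (x : ℤ)
  | read (k i : I)

namespace COp

variable {I : Type}

def issuer : COp I → I
  | transfer i _ _ => i
  | read _ i => i

/-- Balance of account `i` after the operations of `S`, starting from the
initial balance `B`: incoming transfers minus outgoing transfers. -/
def balance [DecidableEq I] (B : ℕ) (S : List (COp I)) (i : I) : ℤ :=
  (B : ℤ)
    + (S.map fun op => match op with
        | transfer _ k x => if k = i then x else 0
        | read _ _ => 0).sum
    - (S.map fun op => match op with
        | transfer j _ x => if j = i then x else 0
        | read _ _ => 0).sum

/-- Validity predicate of the cryptocurrency object. -/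
def valid [DecidableEq I] (B : ℕ) (S : List (COp I)) : COp I → Prop
  | transfer i _ x => 0 < x ∧ x ≤ balance B S i
  | read _ _ => True

end COp

/-- The cryptocurrency object's validity predicate satisfies persistent validity. -/
theorem crypto_persistent_validity {I : Type} [DecidableEq I] (B : ℕ)
    (S : List (COp I)) (op op' : COp I)
    (hne : op.issuer ≠ op'.issuer)
    (hop : COp.valid B S op) (hop' : COp.valid B S op') :
    COp.valid B (S ++ [op']) op := by
  cases op with
  | read _ _ => trivial
  | transfer i k x =>
    obtain ⟨hx, hb⟩ := hop
    refine ⟨hx, ?_⟩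
    have hbal : COp.balance B S i ≤ COp.balance B (S ++ [op']) i := by
      cases op' with
      | read _ _ => simp [COp.balance]
      | transfer i' k' x' =>
        have hne' : i' ≠ i := fun h => hne (by simp [COp.issuer, h])
        obtain ⟨hx', _⟩ := hop'
        simp only [COp.balance, List.map_append, List.sum_append, List.map_cons,
          List.map_nil, List.sum_cons, List.sum_nil]
        simp [hne']
        split <;> omega
    omega
end

section
/- If there are at least two process identifiers and the initial balance satisfies B ≥ 1, then the cryptocurrency object does not satisfy persistent execution: there exist a legal list S of cryptocurrency operations and operations op, op' with issuer op ≠ issuer op', valid S op, and valid S op', such that execute (S ++ [op']) op ≠ execute S op. (This is the paper's claim that the cryptocurrency object does not satisfy the persistent execution property.) -/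
namespace COp

/-- Execution function of the cryptocurrency object: a read returns the
balance of the account read; a transfer returns a dummy value. -/
def execute [DecidableEq I] (B : ℕ) (S : List (COp I)) : COp I → ℤ
  | read k _ => balance B S k
  | transfer _ _ _ => 0

end COp

/-- A history is legal if every operation is valid against the prefix before it. -/
def CLegal {I : Type} [DecidableEq I] (B : ℕ) (S : List (COp I)) : Prop :=
  ∀ (P : List (COp I)) (op : COp I) (Q : List (COp I)), S = P ++ op :: Q → COp.valid B P op

/-- With at least two identifiers and initial balance at least 1, the
cryptocurrency object does not satisfy persistent execution. -/
theorem crypto_not_persistent_execution {I : Type} [DecidableEq I]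
    (htwo : ∃ a b : I, a ≠ b) (B : ℕ) (hB : 1 ≤ B) :
    ∃ (S : List (COp I)) (op op' : COp I),
      CLegal B S ∧ op.issuer ≠ op'.issuer ∧
      COp.valid B S op ∧ COp.valid B S op' ∧
      COp.execute B (S ++ [op']) op ≠ COp.execute B S op := by
  obtain ⟨a, b, hab⟩ := htwo
  refine ⟨[], COp.read a b, COp.transfer a b 1, ?_, ?_, ?_, ?_, ?_⟩
  · intro P op Q h; simp at h
  · simpa [COp.issuer] using (Ne.symm hab)
  · trivial
  · constructor
    · norm_num
    · simp [COp.balance]; omega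
  · simp [COp.execute, COp.balance, if_neg (Ne.symm hab)]
end

section
/- In every legal history of the cryptocurrency object, no process ever has a negative balance: for every legal list S of cryptocurrency operations and every identifier i, balance S i ≥ 0. -/
/-- In every legal history of the cryptocurrency object, no process ever has a
negative balance. -/
theorem crypto_balance_nonneg {I : Type} [DecidableEq I] (B : ℕ)
    (S : List (COp I)) (hS : CLegal B S) (i : I) :
    0 ≤ COp.balance B S i := by
  induction S using List.reverseRecOn generalizing i with
  | nil => simp [COp.balance]
  | append_singleton T op ih =>
    have hT : CLegal B T := fun P o Q h => hS P o (Q ++ [op]) (by simp [h])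
    have hv : COp.valid B T op := hS T op [] rfl
    have ihT := fun j => ih hT j
    cases op with
    | read _ _ =>
      simpa [COp.balance] using ihT i
    | transfer j k x =>
      obtain ⟨hx, hle⟩ := hv
      have hbal : COp.balance B T j =
          (B : ℤ) + (T.map fun op => match op with
            | COp.transfer _ k x => if k = j then x else 0
            | COp.read _ _ => 0).sum
          - (T.map fun op => match op with
            | COp.transfer l _ x => if l = j then x else 0
            | COp.read _ _ => 0).sum := rfl
      by_cases hji : j = i
      · subst hji
        by_cases hki : k = j <;>
          · simp only [COp.balance, List.map_append, List.map_cons, List.map_nil,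
              List.sum_append, List.sum_cons, List.sum_nil, hki, if_pos, if_neg,
              ite_true, ite_false, if_true, if_false, add_zero]
          <;> rw [hbal] at hle <;> linarith [ihT j]
      · have hti : (0:ℤ) ≤
            (B : ℤ) + (T.map fun op => match op with
              | COp.transfer _ k x => if k = i then x else 0
              | COp.read _ _ => 0).sum
            - (T.map fun op => match op with
              | COp.transfer l _ x => if l = i then x else 0
              | COp.read _ _ => 0).sum := ihT i
        by_cases hki : k = i <;>
          · simp only [COp.balance, List.map_append, List.map_cons, List.map_nil,
              List.sum_append, List.sum_cons, List.sum_nil, hji, hki,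
              ite_true, ite_false, add_zero]
          <;> linarith
end

section
/- If the type I of process identifiers has at least T + 2 elements, then the Do-All object does not satisfy persistent validity even on legal histories: there exist a legal list S of Do-All operations, a task t, and distinct identifiers i ≠ j such that valid S (do t i), valid S (do t j), and ¬ valid (S ++ [do t j]) (do t i). (This is the paper's claim that the Do-All object does not satisfy the persistent validity property.) -/
/-- Operations of the Do-All object. -/
inductive DOp (Task I : Type) where
  | doTask (t : Task) (i : I)
  | completed (t : Task) (i : I)

namespace DOp

variable {Task I : Type}

def issuer : DOp Task I → I
  | doTask _ i => i
  | completed _ i => i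

/-- The number of distinct identifiers that performed task `t` in `S`. -/
noncomputable def doers (S : List (DOp Task I)) (t : Task) : ℕ :=
  {j : I | DOp.doTask t j ∈ S}.ncard

/-- Validity predicate of the Do-All object with threshold `T`. -/
def valid (T : ℕ) (S : List (DOp Task I)) : DOp Task I → Prop
  | doTask t _ => doers S t ≤ T
  | completed _ _ => True

end DOp

/-- A history is legal if every operation is valid against the prefix before it. -/
def DLegal {Task I : Type} (T : ℕ) (S : List (DOp Task I)) : Prop :=
  ∀ (P : List (DOp Task I)) (op : DOp Task I) (Q : List (DOp Task I)),
    S = P ++ op :: Q → DOp.valid T P op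

lemma doers_finite {Task I : Type} (S : List (DOp Task I)) (t : Task) :
    {j : I | DOp.doTask t j ∈ S}.Finite := by
  apply Set.Finite.subset (List.finite_toSet (S.map DOp.issuer))
  intro x hx
  simp only [Set.mem_setOf_eq] at hx
  simp only [List.coe_toFinset, Set.mem_setOf_eq, List.mem_map]
  exact ⟨_, hx, rfl⟩

lemma doers_le_length {Task I : Type} (S : List (DOp Task I)) (t : Task) :
    DOp.doers S t ≤ S.length := by
  induction S with
  | nil => simp [DOp.doers]
  | cons op S ih =>
    unfold DOp.doers at *
    have hsub : {j : I | DOp.doTask t j ∈ op :: S} ⊆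
        insert (DOp.issuer op) {j : I | DOp.doTask t j ∈ S} := by
      intro x hx
      simp only [Set.mem_setOf_eq, List.mem_cons] at hx
      rcases hx with h | h
      · exact Or.inl (by rw [← h]; rfl)
      · exact Or.inr h
    calc {j : I | DOp.doTask t j ∈ op :: S}.ncard
        ≤ (insert (DOp.issuer op) {j : I | DOp.doTask t j ∈ S}).ncard :=
          Set.ncard_le_ncard hsub ((doers_finite S t).insert _)
      _ ≤ {j : I | DOp.doTask t j ∈ S}.ncard + 1 :=
          Set.ncard_insert_le _ _
      _ ≤ S.length + 1 := by omega

/-- If there are at least `T + 2` identifiers, the Do-All object does not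
satisfy persistent validity, even on legal histories. -/
theorem doall_not_persistent_validity {Task I : Type} [Nonempty Task]
    (T : ℕ) (hI : ∃ f : Fin (T + 2) → I, Function.Injective f) :
    ∃ (S : List (DOp Task I)) (t : Task) (i j : I),
      DLegal T S ∧ i ≠ j ∧
      DOp.valid T S (DOp.doTask t i) ∧ DOp.valid T S (DOp.doTask t j) ∧
      ¬ DOp.valid T (S ++ [DOp.doTask t j]) (DOp.doTask t i) := by
  obtain ⟨f, hf⟩ := hI
  obtain ⟨t⟩ := ‹Nonempty Task›
  set g : Fin T → I := fun k => f (Fin.castLE (by omega) k) with hg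
  have hginj : Function.Injective g := by
    intro a b hab
    exact Fin.castLE_injective _ (hf hab)
  set S : List (DOp Task I) := (List.finRange T).map (fun k => DOp.doTask t (g k)) with hS
  have hset : {x : I | DOp.doTask t x ∈ S} = Set.range g := by
    ext x
    simp only [Set.mem_setOf_eq, hS, List.mem_map, List.mem_finRange, true_and,
      Set.mem_range]
    constructor
    · rintro ⟨k, hk⟩
      exact ⟨k, by cases hk; rfl⟩
    · rintro ⟨k, hk⟩
      exact ⟨k, by rw [hk]⟩
  have hdoers : DOp.doers S t = T := by
    rw [DOp.doers, hset, ← Set.image_univ, Set.ncard_image_of_injective _ hginj,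
      Set.ncard_univ]
    simp
  refine ⟨S, t, f ⟨T, by omega⟩, f ⟨T + 1, by omega⟩, ?_, ?_, ?_, ?_, ?_⟩
  · intro P op Q hPQ
    have hlen : P.length < T := by
      have := congrArg List.length hPQ
      simp [hS] at this
      omega
    have hP : DOp.doers P t ≤ T := le_trans (doers_le_length P t) (le_of_lt hlen)
    cases op with
    | doTask t' i => 
      exact le_trans (doers_le_length P t') (le_of_lt hlen)
    | completed t' i => trivial
  · intro h
    have := hf h
    simp [Fin.ext_iff] at this
  · simp [DOp.valid, hdoers]
  · simp [DOp.valid, hdoers]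
  · simp only [DOp.valid]
    have hset2 : {x : I | DOp.doTask t x ∈ S ++ [DOp.doTask t (f ⟨T + 1, by omega⟩)]} =
        insert (f ⟨T + 1, by omega⟩) (Set.range g) := by
      ext x
      simp only [Set.mem_setOf_eq, List.mem_append, List.mem_singleton, Set.mem_insert_iff,
        ← hset, Set.mem_setOf_eq]
      constructor
      · rintro (h | h)
        · right; exact h
        · left; cases h; rfl
      · rintro (h | h)
        · right; rw [h]
        · left; exact h
    have hnotmem : f ⟨T + 1, by omega⟩ ∉ Set.range g := by
      rintro ⟨k, hk⟩
      have := hf hk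
      simp [Fin.ext_iff, Fin.castLE] at this
      omega
    have : DOp.doers (S ++ [DOp.doTask t (f ⟨T + 1, by omega⟩)]) t = T + 1 := by
      rw [DOp.doers, hset2, Set.ncard_insert_of_notMem hnotmem (by
        rw [← hset]; exact doers_finite S t), ← Set.image_univ,
        Set.ncard_image_of_injective _ hginj, Set.ncard_univ]
      simp
    omega
end

section
/- If the type I of process identifiers has at least two elements, then the versioned read/write object does not satisfy persistent validity even on legal histories: there exist a legal list S of versioned-object operations and operations op, op' with issuer op ≠ issuer op', valid S op, and valid S op', such that ¬ valid (S ++ [op']) op. (This is the paper's claim that the versioned object does not satisfy the persistent validity property.) -/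
/-- Operations of the versioned read/write object. -/
inductive VOp (X V I : Type) where
  | write (ver : ℕ) (v : V) (x : X) (i : I)
  | read (x : X) (i : I)

namespace VOp

variable {X V I : Type}

def issuer : VOp X V I → I
  | write _ _ _ i => i
  | read _ i => i

/-- Validity predicate of the versioned object: a write to `x` is valid iff its
version is strictly larger than every version previously written to `x`. -/
def valid (S : List (VOp X V I)) : VOp X V I → Prop
  | write ver _ x _ => ∀ (ver' : ℕ) (v' : V) (j : I), VOp.write ver' v' x j ∈ S → ver' < ver
  | read _ _ => True

end VOp

/-- A history is legal if every operation is valid against the prefix before it. -/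
def VLegal {X V I : Type} (S : List (VOp X V I)) : Prop :=
  ∀ (P : List (VOp X V I)) (op : VOp X V I) (Q : List (VOp X V I)),
    S = P ++ op :: Q → VOp.valid P op

/-- With at least two identifiers, the versioned object does not satisfy
persistent validity, even on legal histories. -/
theorem versioned_not_persistent_validity {X V I : Type}
    [Nonempty X] [Nonempty V] (htwo : ∃ a b : I, a ≠ b) :
    ∃ (S : List (VOp X V I)) (op op' : VOp X V I),
      VLegal S ∧ op.issuer ≠ op'.issuer ∧
      VOp.valid S op ∧ VOp.valid S op' ∧
      ¬ VOp.valid (S ++ [op']) op := by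
  obtain ⟨a, b, hab⟩ := htwo
  obtain ⟨x⟩ := ‹Nonempty X›
  obtain ⟨v⟩ := ‹Nonempty V›
  refine ⟨[], VOp.write 1 v x a, VOp.write 1 v x b, ?_, hab, ?_, ?_, ?_⟩
  · intro P op Q h; simp at h
  · intro ver' v' j h; simp at h
  · intro ver' v' j h; simp at h
  · intro h
    have := h 1 v b (by simp)
    omega
end

section
/- If the type I of process identifiers has at least two elements and the type V of values is nonempty, then the versioned read/write object does not satisfy persistent execution: there exist a legal list S of versioned-object operations and operations op, op' with issuer op ≠ issuer op', valid S op, and valid S op', such that execute (S ++ [op']) op ≠ execute S op. (This is the paper's claim that the versioned object does not satisfy the persistent execution property.) -/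
namespace VOp

/-- The (version, value) pairs of the writes to `x` occurring in `S`, in order. -/
def writesTo [DecidableEq X] (S : List (VOp X V I)) (x : X) : List (ℕ × V) :=
  S.filterMap fun op => match op with
    | write ver v x' _ => if x' = x then some (ver, v) else none
    | read _ _ => none

/-- Execution function of the versioned object: a read of `x` returns the last
write to `x` whose version is maximal among all writes to `x` in `S` (none if
no write to `x` occurs); a write returns none. -/
def execute [DecidableEq X] (S : List (VOp X V I)) : VOp X V I → Option (ℕ × V)
  | read x _ =>
    ((writesTo S x).filter fun p => (writesTo S x).all fun q => decide (q.1 ≤ p.1)).getLast?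
  | write _ _ _ _ => none

end VOp

/-- With at least two identifiers and a nonempty value type, the versioned
object does not satisfy persistent execution. -/
theorem versioned_not_persistent_execution {X V I : Type} [DecidableEq X]
    [Nonempty X] [Nonempty V] (htwo : ∃ a b : I, a ≠ b) :
    ∃ (S : List (VOp X V I)) (op op' : VOp X V I),
      VLegal S ∧ op.issuer ≠ op'.issuer ∧
      VOp.valid S op ∧ VOp.valid S op' ∧
      VOp.execute (S ++ [op']) op ≠ VOp.execute S op := by
  obtain ⟨a, b, hab⟩ := htwo
  obtain ⟨x⟩ := ‹Nonempty X›
  obtain ⟨v⟩ := ‹Nonempty V›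
  refine ⟨[], VOp.read x a, VOp.write 0 v x b, ?_, hab, trivial, ?_, ?_⟩
  · intro P op Q h
    exact absurd h (by simp)
  · intro ver' v' j h
    simp at h
  · simp [VOp.execute, VOp.writesTo]
end
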